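/- Let X = Y Yᵀ with Y ∈ ℝ^{n×r} of rank r, λ_r(X) = σ_r(Y)² its smallest nonzero eigenvalue. For any symmetric positive semidefinite X̃ of rank r with ‖X̃ − X‖_F < 2λ_r(X)/(√(r+4) + √r), there exists a unique H in the horizontal ball {H ∈ H_Y : ‖H‖_F < σ_r(Y)} such that X̃ = (Y+H)(Y+H)ᵀ. -/

import Mathlib

open Matrix BigOperators

/-- Frobenius norm of a real matrix. -/
noncomputable def frobNorm {n r : ℕ} (A : Matrix (Fin n) (Fin r) ℝ) : ℝ :=
  Real.sqrt (∑ i, ∑ j, (A i j) ^ 2)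

/-- Smallest singular value of a real `n × r` matrix: the infimum of `‖Y x‖`
over Euclidean unit vectors `x`. -/
noncomputable def sigmaMin {n r : ℕ} (Y : Matrix (Fin n) (Fin r) ℝ) : ℝ :=
  sInf {c | ∃ x : Fin r → ℝ, (∑ j, (x j) ^ 2) = 1 ∧
    c = Real.sqrt (∑ i, (Y.mulVec x i) ^ 2)}

set_option linter.unusedSectionVars false

namespace InjRad

variable {m q p : Type*} [Fintype m] [Fintype q] [Fintype p]

lemma sumSq_nonneg (A : Matrix m q ℝ) : 0 ≤ ∑ i, ∑ j, A i j ^ 2 :=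
  Finset.sum_nonneg fun _ _ => Finset.sum_nonneg fun _ _ => sq_nonneg _

lemma sumSq_eq_trace (A : Matrix m q ℝ) : ∑ i, ∑ j, A i j ^ 2 = (Aᵀ * A).trace := by
  rw [Matrix.trace]
  rw [Finset.sum_comm]
  simp [Matrix.mul_apply, Matrix.diag, sq]

lemma dot_mulVec_eq (A : Matrix m q ℝ) (v : q → ℝ) :
    v ⬝ᵥ ((Aᵀ * A) *ᵥ v) = ∑ i, (A *ᵥ v) i ^ 2 := by
  rw [← Matrix.mulVec_mulVec, Matrix.dotProduct_mulVec, Matrix.vecMul_transpose]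
  simp [dotProduct, sq]

lemma cs_mulVec (A : Matrix m q ℝ) (v : q → ℝ) :
    ∑ i, (A *ᵥ v) i ^ 2 ≤ (∑ i, ∑ j, A i j ^ 2) * (∑ j, v j ^ 2) := by
  rw [Finset.sum_mul]
  apply Finset.sum_le_sum
  intro i _
  calc (A *ᵥ v) i ^ 2 = (∑ j, A i j * v j) ^ 2 := rfl
    _ ≤ (∑ j, A i j ^ 2) * (∑ j, v j ^ 2) :=
        Finset.sum_mul_sq_le_sq_mul_sq _ _ _

lemma frobNorm_nonneg {n r : ℕ} (A : Matrix (Fin n) (Fin r) ℝ) : 0 ≤ frobNorm A :=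
  Real.sqrt_nonneg _

lemma frobNorm_sq {n r : ℕ} (A : Matrix (Fin n) (Fin r) ℝ) :
    frobNorm A ^ 2 = ∑ i, ∑ j, A i j ^ 2 :=
  Real.sq_sqrt (sumSq_nonneg A)

lemma sigmaMin_nonneg {n r : ℕ} (Y : Matrix (Fin n) (Fin r) ℝ) : 0 ≤ sigmaMin Y :=
  Real.sInf_nonneg (by rintro c ⟨x, -, rfl⟩; exact Real.sqrt_nonneg _)

lemma sigmaMin_zero_of_r_zero {n : ℕ} (Y : Matrix (Fin n) (Fin 0) ℝ) : sigmaMin Y = 0 := by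
  have : {c | ∃ x : Fin 0 → ℝ, (∑ j, (x j) ^ 2) = 1 ∧
      c = Real.sqrt (∑ i, (Y.mulVec x i) ^ 2)} = ∅ := by
    ext c; simp
  rw [sigmaMin, this, Real.sInf_empty]

/-- σ_min bound: σ² ∑ v² ≤ ∑ (Yv)². -/
lemma sigmaMin_le {n r : ℕ} (Y : Matrix (Fin n) (Fin r) ℝ) (v : Fin r → ℝ) :
    sigmaMin Y ^ 2 * (∑ j, v j ^ 2) ≤ ∑ i, (Y *ᵥ v) i ^ 2 := by
  rcases eq_or_ne v 0 with rfl | hv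
  · simp
  · have hs : (0:ℝ) < ∑ j, v j ^ 2 := by
      have := Finset.sum_nonneg (fun j (_ : j ∈ Finset.univ) => sq_nonneg (v j))
      rcases this.lt_or_eq with h | h
      · exact h
      · exfalso; apply hv; funext j
        have := (Finset.sum_eq_zero_iff_of_nonneg
          (fun j (_ : j ∈ Finset.univ) => sq_nonneg (v j))).1 h.symm j (Finset.mem_univ j)
        exact pow_eq_zero_iff (two_ne_zero) |>.1 this
    set c := Real.sqrt (∑ j, v j ^ 2) with hc
    have hc0 : 0 < c := Real.sqrt_pos.2 hs
    have hx : (∑ j, (c⁻¹ • v) j ^ 2) = 1 := by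
      simp only [Pi.smul_apply, smul_eq_mul, mul_pow]
      rw [← Finset.mul_sum]
      have : c ^ 2 = ∑ j, v j ^ 2 := Real.sq_sqrt hs.le
      rw [inv_pow, this, inv_mul_cancel₀ hs.ne']
    have hmem : Real.sqrt (∑ i, (Y *ᵥ (c⁻¹ • v)) i ^ 2) ∈
        {c | ∃ x : Fin r → ℝ, (∑ j, (x j) ^ 2) = 1 ∧
          c = Real.sqrt (∑ i, (Y.mulVec x i) ^ 2)} := ⟨_, hx, rfl⟩
    have hbdd : BddBelow {c | ∃ x : Fin r → ℝ, (∑ j, (x j) ^ 2) = 1 ∧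
        c = Real.sqrt (∑ i, (Y.mulVec x i) ^ 2)} :=
      ⟨0, by rintro c ⟨x, -, rfl⟩; exact Real.sqrt_nonneg _⟩
    have h1 : sigmaMin Y ≤ Real.sqrt (∑ i, (Y *ᵥ (c⁻¹ • v)) i ^ 2) :=
      csInf_le hbdd hmem
    have h2 : sigmaMin Y ^ 2 ≤ ∑ i, (Y *ᵥ (c⁻¹ • v)) i ^ 2 := by
      have := pow_le_pow_left₀ (sigmaMin_nonneg Y) h1 2
      rwa [Real.sq_sqrt (Finset.sum_nonneg fun _ _ => sq_nonneg _)] at this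
    have h3 : ∑ i, (Y *ᵥ (c⁻¹ • v)) i ^ 2 = (∑ i, (Y *ᵥ v) i ^ 2) / (∑ j, v j ^ 2) := by
      rw [Matrix.mulVec_smul]
      simp only [Pi.smul_apply, smul_eq_mul, mul_pow]
      have : c ^ 2 = ∑ j, v j ^ 2 := Real.sq_sqrt hs.le
      rw [← Finset.mul_sum, inv_pow, this, inv_mul_eq_div]
    rw [h3] at h2
    calc sigmaMin Y ^ 2 * (∑ j, v j ^ 2)
        ≤ ((∑ i, (Y *ᵥ v) i ^ 2) / (∑ j, v j ^ 2)) * (∑ j, v j ^ 2) := by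
          exact mul_le_mul_of_nonneg_right h2 hs.le
      _ = ∑ i, (Y *ᵥ v) i ^ 2 := div_mul_cancel₀ _ hs.ne'

section PsdSqrt
open scoped MatrixOrder
variable {ι : Type*} [Fintype ι] [DecidableEq ι]
noncomputable def psdSqrt (A : Matrix ι ι ℝ) : Matrix ι ι ℝ := CFC.sqrt A
lemma psdSqrt_posSemidef {A : Matrix ι ι ℝ} : (psdSqrt A).PosSemidef :=
  Matrix.nonneg_iff_posSemidef.1 (CFC.sqrt_nonneg A)
lemma psdSqrt_mul_self {A : Matrix ι ι ℝ} (hA : A.PosSemidef) : psdSqrt A * psdSqrt A = A :=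
  CFC.sqrt_mul_sqrt_self A hA.nonneg
lemma psd_eq_of_sq_eq_sq {A B : Matrix ι ι ℝ} (hA : A.PosSemidef) (hB : B.PosSemidef)
    (h : A ^ 2 = B ^ 2) : A = B :=
  (CFC.sq_eq_sq_iff A B hA.nonneg hB.nonneg).1 h
end PsdSqrt

/-- trace of product of two real PSD matrices is nonnegative -/
lemma trace_mul_psd_nonneg [DecidableEq m] {P Q : Matrix m m ℝ}
    (hP : P.PosSemidef) (hQ : Q.PosSemidef) : 0 ≤ (P * Q).trace := by
  obtain ⟨B, hB⟩ : ∃ B : Matrix m m ℝ, P = Bᴴ * B :=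
    ⟨psdSqrt P, by rw [(psdSqrt_posSemidef (A := P)).1.eq, psdSqrt_mul_self hP]⟩
  rw [hB, Matrix.conjTranspose_eq_transpose_of_trivial, Matrix.mul_assoc,
    Matrix.trace_mul_comm]
  apply Finset.sum_nonneg
  intro i _
  have h0 := hQ.dotProduct_mulVec_nonneg (fun k => B i k)
  simp only [star_trivial] at h0
  calc (0:ℝ) ≤ (fun k => B i k) ⬝ᵥ Q *ᵥ (fun k => B i k) := h0
    _ = ((B * Q * Bᵀ).diag) i := by
        simp [Matrix.diag, Matrix.mul_apply, dotProduct, Matrix.mulVec,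
          Finset.mul_sum, Finset.sum_mul, Matrix.transpose_apply]
        rw [Finset.sum_comm]
        exact Finset.sum_congr rfl fun a _ => Finset.sum_congr rfl fun b _ => by ring

lemma eq_zero_of_mul_transpose_self (M : Matrix m q ℝ) (h : M * Mᵀ = 0) : M = 0 := by
  ext i j
  have hdiag : (M * Mᵀ) i i = 0 := by rw [h]; rfl
  have : ∑ k, M i k ^ 2 = 0 := by
    rw [← hdiag]; simp [Matrix.mul_apply, sq]
  have := (Finset.sum_eq_zero_iff_of_nonneg
    (fun k (_ : k ∈ Finset.univ) => sq_nonneg (M i k))).1 this j (Finset.mem_univ j)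
  simpa using pow_eq_zero_iff two_ne_zero |>.1 this

lemma ext_of_mulVec [DecidableEq q] {A B : Matrix m q ℝ}
    (h : ∀ v, A *ᵥ v = B *ᵥ v) : A = B := by
  ext i j
  have := congrFun (h (Pi.single j 1)) i
  simpa [Matrix.mulVec_single] using this

lemma transpose_eq_of_isHermitian {M : Matrix m m ℝ} (h : M.IsHermitian) : Mᵀ = M := by
  rw [← Matrix.conjTranspose_eq_transpose_of_trivial]; exact h

lemma vec_sumSq_pos {q : Type*} [Fintype q] {v : q → ℝ} (hv : v ≠ 0) :
    0 < ∑ j, v j ^ 2 := by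
  rcases (Finset.sum_nonneg fun j (_ : j ∈ Finset.univ) => sq_nonneg (v j)).lt_or_eq with h | h
  · exact h
  · exfalso; apply hv; funext j
    have := (Finset.sum_eq_zero_iff_of_nonneg
      (fun j (_ : j ∈ Finset.univ) => sq_nonneg (v j))).1 h.symm j (Finset.mem_univ j)
    exact pow_eq_zero_iff two_ne_zero |>.1 this

lemma dot_transpose {m q : Type*} [Fintype m] [Fintype q]
    (Y : Matrix m q ℝ) (v : q → ℝ) (w : m → ℝ) :
    v ⬝ᵥ (Yᵀ *ᵥ w) = (Y *ᵥ v) ⬝ᵥ w := by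
  simp [dotProduct, Matrix.mulVec, Finset.mul_sum, Finset.sum_mul]
  rw [Finset.sum_comm]
  exact Finset.sum_congr rfl fun i _ => Finset.sum_congr rfl fun j _ => by ring

lemma dot_cs {q : Type*} [Fintype q] (v w : q → ℝ) :
    (v ⬝ᵥ w) ^ 2 ≤ (∑ j, v j ^ 2) * (∑ j, w j ^ 2) :=
  Finset.sum_mul_sq_le_sq_mul_sq _ _ _

lemma eq_of_same_gram {n r : ℕ} {Z Z' : Matrix (Fin n) (Fin r) ℝ}
    {Y : Matrix (Fin n) (Fin r) ℝ}
    (h : Z * Zᵀ = Z' * Z'ᵀ) (hN : IsUnit (Z'ᵀ * Z').det)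
    (hY : Yᵀ * Z = Yᵀ * Z') (hT : IsUnit (Yᵀ * Z').det) : Z = Z' := by
  set N := Z'ᵀ * Z' with hNdef
  have hNsym : Nᵀ = N := by rw [hNdef, Matrix.transpose_mul, Matrix.transpose_transpose]
  have hNinv : N⁻¹ * N = 1 := Matrix.nonsing_inv_mul N hN
  set O := N⁻¹ * Z'ᵀ * Z with hOdef
  have e1 : Z' * O * Zᵀ = Z' * Z'ᵀ := by
    calc Z' * O * Zᵀ = Z' * (N⁻¹ * (Z'ᵀ * (Z * Zᵀ))) := by
          simp only [hOdef, Matrix.mul_assoc]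
      _ = Z' * (N⁻¹ * (Z'ᵀ * (Z' * Z'ᵀ))) := by rw [h]
      _ = Z' * ((N⁻¹ * N) * Z'ᵀ) := by simp only [hNdef, Matrix.mul_assoc]
      _ = Z' * Z'ᵀ := by rw [hNinv, Matrix.one_mul]
  have e2 : Z * (Z' * O)ᵀ = Z' * Z'ᵀ := by
    have := congrArg Matrix.transpose e1
    simp only [Matrix.transpose_mul, Matrix.transpose_transpose, Matrix.mul_assoc] at this
    calc Z * (Z' * O)ᵀ = Z * (Oᵀ * Z'ᵀ) := by rw [Matrix.transpose_mul]
      _ = Z'* Z'ᵀ := this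
  have hOT : Oᵀ = Zᵀ * Z' * N⁻¹ := by
    rw [hOdef, Matrix.transpose_mul, Matrix.transpose_mul, Matrix.transpose_transpose,
      Matrix.transpose_nonsing_inv, hNsym, Matrix.mul_assoc]
  have e3 : (Z' * O) * (Z' * O)ᵀ = Z' * Z'ᵀ := by
    calc (Z' * O) * (Z' * O)ᵀ = Z' * O * (Oᵀ * Z'ᵀ) := by rw [Matrix.transpose_mul]
      _ = Z' * O * (Zᵀ * (Z' * (N⁻¹ * Z'ᵀ))) := by
          rw [hOT]; simp only [Matrix.mul_assoc]
      _ = (Z' * O * Zᵀ) * (Z' * (N⁻¹ * Z'ᵀ)) := by simp only [Matrix.mul_assoc]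
      _ = (Z' * Z'ᵀ) * (Z' * (N⁻¹ * Z'ᵀ)) := by rw [e1]
      _ = Z' * ((Z'ᵀ * Z') * N⁻¹) * Z'ᵀ := by simp only [Matrix.mul_assoc]
      _ = Z' * Z'ᵀ := by
          rw [← hNdef, Matrix.mul_nonsing_inv N hN, Matrix.mul_one]
  have hM : (Z - Z' * O) * (Z - Z' * O)ᵀ = 0 := by
    rw [Matrix.transpose_sub, Matrix.sub_mul, Matrix.mul_sub, Matrix.mul_sub,
      h, e1, e2, e3]
    simp
  have hZO : Z = Z' * O := by
    have := eq_zero_of_mul_transpose_self _ hM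
    rwa [sub_eq_zero] at this
  have hO1 : O = 1 := by
    have h1 : Yᵀ * Z' * O = Yᵀ * Z' := by
      rw [Matrix.mul_assoc, ← hZO, hY]
    have := congrArg (fun M => (Yᵀ * Z')⁻¹ * M) h1
    simpa [← Matrix.mul_assoc, Matrix.nonsing_inv_mul _ hT] using this
  rw [hZO, hO1, Matrix.mul_one]

/-- If `C = R * Y` has invertible Gram matrix `K = CᵀC` and `rank R ≤ r`, then the
projection onto the column space of `C` fixes `R`. -/
lemma proj_fix {n r : ℕ} (R : Matrix (Fin n) (Fin n) ℝ) (Y : Matrix (Fin n) (Fin r) ℝ)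
    (hK : IsUnit ((R * Y)ᵀ * (R * Y)).det) (hrankR : R.rank ≤ r) :
    (R * Y) * ((R * Y)ᵀ * (R * Y))⁻¹ * (R * Y)ᵀ * R = R := by
  set C := R * Y with hC
  set K := Cᵀ * C with hKdef
  have hKinv : K⁻¹ * K = 1 := Matrix.nonsing_inv_mul K hK
  have hrankC : C.rank = r := by
    have h1 : (Cᵀ * C).rank = C.rank := Matrix.rank_transpose_mul_self C
    have h2 : (Cᵀ * C).rank = r := by
      rw [Matrix.rank_of_isUnit _ ((Matrix.isUnit_iff_isUnit_det _).2 hK), Fintype.card_fin]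
    omega
  have hrange : LinearMap.range C.mulVecLin = LinearMap.range R.mulVecLin := by
    have hle : LinearMap.range C.mulVecLin ≤ LinearMap.range R.mulVecLin := by
      rw [hC, Matrix.mulVecLin_mul]
      exact LinearMap.range_comp_le_range _ _
    refine Submodule.eq_of_le_of_finrank_le hle ?_
    show Module.finrank ℝ (LinearMap.range R.mulVecLin) ≤
      Module.finrank ℝ (LinearMap.range C.mulVecLin)
    have : Module.finrank ℝ (LinearMap.range R.mulVecLin) = R.rank := rfl
    have h2 : Module.finrank ℝ (LinearMap.range C.mulVecLin) = C.rank := rfl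
    omega
  apply ext_of_mulVec
  intro v
  have hmem : R *ᵥ v ∈ LinearMap.range C.mulVecLin := by
    rw [hrange]; exact ⟨v, rfl⟩
  obtain ⟨w, hw⟩ := hmem
  have hw' : C *ᵥ w = R *ᵥ v := hw
  calc (C * K⁻¹ * Cᵀ * R) *ᵥ v = (C * K⁻¹ * Cᵀ) *ᵥ (R *ᵥ v) := by
        rw [← Matrix.mulVec_mulVec]
    _ = (C * K⁻¹ * Cᵀ) *ᵥ (C *ᵥ w) := by rw [hw']
    _ = (C * K⁻¹ * (Cᵀ * C)) *ᵥ w := by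
        simp only [Matrix.mulVec_mulVec, Matrix.mul_assoc]
    _ = C *ᵥ w := by
        rw [← hKdef, Matrix.mul_assoc]
        have : K⁻¹ * K = 1 := hKinv
        rw [this, Matrix.mul_one]
    _ = R *ᵥ v := hw'


end InjRad

namespace InjRad

lemma quad_abs_le {n : ℕ} (M : Matrix (Fin n) (Fin n) ℝ) (v : Fin n → ℝ) :
    |v ⬝ᵥ M *ᵥ v| ≤ frobNorm M * ∑ i, v i ^ 2 := by
  have h1 : (v ⬝ᵥ M *ᵥ v) ^ 2 ≤ (∑ i, v i ^ 2) * (∑ i, (M *ᵥ v) i ^ 2) := dot_cs _ _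
  have h2 : ∑ i, (M *ᵥ v) i ^ 2 ≤ (frobNorm M ^ 2) * (∑ i, v i ^ 2) := by
    rw [frobNorm_sq]; exact cs_mulVec M v
  have hf : 0 ≤ frobNorm M := frobNorm_nonneg M
  have hs : 0 ≤ ∑ i, v i ^ 2 := Finset.sum_nonneg fun _ _ => sq_nonneg _
  have key : (v ⬝ᵥ M *ᵥ v) ^ 2 ≤ (frobNorm M * ∑ i, v i ^ 2) ^ 2 := by nlinarith
  refine abs_le.2 ⟨?_, ?_⟩ <;> nlinarith [mul_nonneg hf hs]

lemma dot_self_eq_sumSq {q : Type*} [Fintype q] (v : q → ℝ) :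
    v ⬝ᵥ v = ∑ j, v j ^ 2 := by
  simp [dotProduct, sq]

lemma posDef_of_horizontal_ball {n r : ℕ} {Y E : Matrix (Fin n) (Fin r) ℝ}
    (hsym : (Yᵀ * (Y + E))ᵀ = Yᵀ * (Y + E))
    (hσ : 0 < sigmaMin Y) (hE : frobNorm E < sigmaMin Y) :
    (Yᵀ * (Y + E)).PosDef := by
  refine Matrix.PosDef.of_dotProduct_mulVec_pos ?_ ?_
  · rw [Matrix.IsHermitian, Matrix.conjTranspose_eq_transpose_of_trivial]
    exact hsym
  · intro v hv
    simp only [star_trivial]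
    set σ := sigmaMin Y with hσdef
    have hquad : v ⬝ᵥ (Yᵀ * (Y + E)) *ᵥ v = (Y *ᵥ v) ⬝ᵥ ((Y + E) *ᵥ v) := by
      rw [← Matrix.mulVec_mulVec, dot_transpose]
    rw [hquad, Matrix.add_mulVec, dotProduct_add, dot_self_eq_sumSq]
    set a := ∑ i, (Y *ᵥ v) i ^ 2 with ha
    set d := (Y *ᵥ v) ⬝ᵥ (E *ᵥ v) with hd
    set b := ∑ i, (E *ᵥ v) i ^ 2 with hb
    have hsv : 0 < ∑ j, v j ^ 2 := vec_sumSq_pos hv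
    have hσa : σ ^ 2 * (∑ j, v j ^ 2) ≤ a := sigmaMin_le Y v
    have hbE : b ≤ frobNorm E ^ 2 * (∑ j, v j ^ 2) := by
      rw [frobNorm_sq]; exact cs_mulVec E v
    have hdcs : d ^ 2 ≤ a * b := dot_cs _ _
    have hfE : 0 ≤ frobNorm E := frobNorm_nonneg E
    have hE2 : frobNorm E ^ 2 < σ ^ 2 := by nlinarith
    have hba : b < a := by nlinarith
    have ha0 : 0 < a := by nlinarith
    nlinarith [mul_lt_mul_of_pos_left hba ha0, sq_nonneg (a + d)]

lemma posDef_K {n r : ℕ} {Y : Matrix (Fin n) (Fin r) ℝ} {Xt : Matrix (Fin n) (Fin n) ℝ}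
    (hXt : Xt.PosSemidef) (hσ : 0 < sigmaMin Y)
    (hδ : frobNorm (Xt - Y * Yᵀ) < sigmaMin Y ^ 2) :
    (Yᵀ * Xt * Y).PosDef := by
  have hXtsym : Xtᵀ = Xt := transpose_eq_of_isHermitian hXt.1
  refine Matrix.PosDef.of_dotProduct_mulVec_pos ?_ ?_
  · rw [Matrix.IsHermitian, Matrix.conjTranspose_eq_transpose_of_trivial]
    rw [Matrix.transpose_mul, Matrix.transpose_mul, Matrix.transpose_transpose, hXtsym,
      Matrix.mul_assoc]
  · intro v hv
    simp only [star_trivial]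
    set σ := sigmaMin Y with hσdef
    set w := Y *ᵥ v with hw
    have hquad : v ⬝ᵥ (Yᵀ * Xt * Y) *ᵥ v = w ⬝ᵥ (Xt *ᵥ w) := by
      rw [Matrix.mul_assoc, ← Matrix.mulVec_mulVec, dot_transpose, ← Matrix.mulVec_mulVec]
    rw [hquad]
    have hXw : w ⬝ᵥ ((Y * Yᵀ) *ᵥ w) = ∑ i, (Yᵀ *ᵥ w) i ^ 2 := by
      have := dot_mulVec_eq Yᵀ w
      rwa [Matrix.transpose_transpose] at this
    set a := ∑ i, w i ^ 2 with ha
    set su := ∑ i, (Yᵀ *ᵥ w) i ^ 2 with hsu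
    have hsplit : w ⬝ᵥ ((Xt - Y * Yᵀ) *ᵥ w) = w ⬝ᵥ (Xt *ᵥ w) - su := by
      rw [Matrix.sub_mulVec, dotProduct_sub, hXw]
    have hsv : 0 < ∑ j, v j ^ 2 := vec_sumSq_pos hv
    have hσa : σ ^ 2 * (∑ j, v j ^ 2) ≤ a := sigmaMin_le Y v
    have ha0 : 0 < a := by nlinarith [mul_pos (pow_pos hσ 2) hsv]
    have hvu : v ⬝ᵥ (Yᵀ *ᵥ w) = a := by
      rw [dot_transpose, ← hw, dot_self_eq_sumSq]
    have hcs : a ^ 2 ≤ (∑ j, v j ^ 2) * su := by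
      have := dot_cs v (Yᵀ *ᵥ w)
      rwa [hvu] at this
    have hsua : σ ^ 2 * a ≤ su := by nlinarith
    have hΔ : |w ⬝ᵥ ((Xt - Y * Yᵀ) *ᵥ w)| ≤ frobNorm (Xt - Y * Yᵀ) * a :=
      quad_abs_le _ w
    have habs := abs_le.1 hΔ
    nlinarith [habs.1, habs.2]

end InjRad

namespace InjRad

lemma key_ineq {n r : ℕ} {Y Z : Matrix (Fin n) (Fin r) ℝ}
    (hSpsd : (Yᵀ * Z).PosSemidef) :
    sigmaMin Y ^ 2 * (∑ i, ∑ j, (Z - Y) i j ^ 2) ≤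
      2 * (∑ i, ∑ j, (Z * Zᵀ - Y * Yᵀ) i j ^ 2) := by
  classical
  set σ := sigmaMin Y with hσdef
  set H := Z - Y with hH
  set W := Z + Y with hW
  have hsymS : Zᵀ * Y = Yᵀ * Z := by
    have := transpose_eq_of_isHermitian hSpsd.1
    rw [Matrix.transpose_mul, Matrix.transpose_transpose] at this
    exact this
  -- D = WᵀH = ZᵀZ - YᵀY
  have hD : Wᵀ * H = Zᵀ * Z - Yᵀ * Y := by
    rw [hW, hH, Matrix.transpose_add, Matrix.add_mul, Matrix.mul_sub, Matrix.mul_sub,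
      hsymS]
    abel
  set D := Zᵀ * Z - Yᵀ * Y with hDdef
  have hDT : Dᵀ = D := by
    rw [hDdef, Matrix.transpose_sub, Matrix.transpose_mul, Matrix.transpose_mul,
      Matrix.transpose_transpose, Matrix.transpose_transpose]
  -- identity: H*Wᵀ + W*Hᵀ = 2 • (Z*Zᵀ - Y*Yᵀ)
  have hHWt : H * Wᵀ = (Z * Zᵀ - Y * Zᵀ) + (Z * Yᵀ - Y * Yᵀ) := by
    rw [hH, hW, Matrix.transpose_add, Matrix.mul_add, Matrix.sub_mul, Matrix.sub_mul]
  have hWHt : W * Hᵀ = (Z * Zᵀ + Y * Zᵀ) - (Z * Yᵀ + Y * Yᵀ) := by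
    rw [hH, hW, Matrix.transpose_sub, Matrix.mul_sub, Matrix.add_mul, Matrix.add_mul]
  have E2 : H * Wᵀ + W * Hᵀ = (2:ℝ) • (Z * Zᵀ - Y * Yᵀ) := by
    rw [hHWt, hWHt, two_smul]; abel
  -- G := H*Wᵀ + W*Hᵀ ; sumSq G = 2 tr(WᵀW HᵀH) + 2 tr(D*D)
  have hGT : (H * Wᵀ)ᵀ = W * Hᵀ := by
    rw [Matrix.transpose_mul, Matrix.transpose_transpose]
  have t2 : ((H * Wᵀ) * (W * Hᵀ)).trace = ((Wᵀ * W) * (Hᵀ * H)).trace := by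
    calc ((H * Wᵀ) * (W * Hᵀ)).trace = (H * (Wᵀ * W * Hᵀ)).trace := by
          simp only [Matrix.mul_assoc]
      _ = ((Wᵀ * W * Hᵀ) * H).trace := Matrix.trace_mul_comm _ _
      _ = ((Wᵀ * W) * (Hᵀ * H)).trace := by simp only [Matrix.mul_assoc]
  have t3 : ((W * Hᵀ) * (H * Wᵀ)).trace = ((Wᵀ * W) * (Hᵀ * H)).trace := by
    calc ((W * Hᵀ) * (H * Wᵀ)).trace = (W * (Hᵀ * H * Wᵀ)).trace := by
          simp only [Matrix.mul_assoc]
      _ = ((Hᵀ * H * Wᵀ) * W).trace := Matrix.trace_mul_comm _ _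
      _ = ((Hᵀ * H) * (Wᵀ * W)).trace := by simp only [Matrix.mul_assoc]
      _ = ((Wᵀ * W) * (Hᵀ * H)).trace := Matrix.trace_mul_comm _ _
  have t1 : ((H * Wᵀ) * (H * Wᵀ)).trace = (D * D).trace := by
    calc ((H * Wᵀ) * (H * Wᵀ)).trace = (H * (Wᵀ * H * Wᵀ)).trace := by
          simp only [Matrix.mul_assoc]
      _ = ((Wᵀ * H * Wᵀ) * H).trace := Matrix.trace_mul_comm _ _
      _ = ((Wᵀ * H) * (Wᵀ * H)).trace := by simp only [Matrix.mul_assoc]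
      _ = (D * D).trace := by rw [hD]
  have t4 : ((W * Hᵀ) * (W * Hᵀ)).trace = (D * D).trace := by
    have h1 : ((W * Hᵀ) * (W * Hᵀ)).trace = (((H * Wᵀ) * (H * Wᵀ))ᵀ).trace := by
      rw [Matrix.transpose_mul, hGT]
    rw [h1, Matrix.trace_transpose, t1]
  have hsumG : ∑ i, ∑ j, ((2:ℝ) • (Z * Zᵀ - Y * Yᵀ)) i j ^ 2
      = 2 * ((Wᵀ * W) * (Hᵀ * H)).trace + 2 * (D * D).trace := by
    rw [← E2, sumSq_eq_trace]
    have hGsym : (H * Wᵀ + W * Hᵀ)ᵀ = H * Wᵀ + W * Hᵀ := by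
      rw [Matrix.transpose_add, hGT, ← hGT, Matrix.transpose_transpose]
      abel
    rw [hGsym, Matrix.add_mul, Matrix.mul_add, Matrix.mul_add, Matrix.trace_add,
      Matrix.trace_add, Matrix.trace_add, t1, t2, t3, t4]
    ring
  have hsum2 : ∑ i, ∑ j, ((2:ℝ) • (Z * Zᵀ - Y * Yᵀ)) i j ^ 2
      = 4 * ∑ i, ∑ j, (Z * Zᵀ - Y * Yᵀ) i j ^ 2 := by
    rw [Finset.mul_sum]
    refine Finset.sum_congr rfl fun i _ => ?_
    rw [Finset.mul_sum]
    refine Finset.sum_congr rfl fun j _ => ?_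
    simp [Matrix.smul_apply]
    ring
  -- PSD bounds
  have hHH : (Hᵀ * H).PosSemidef := by
    have := Matrix.posSemidef_conjTranspose_mul_self H
    rwa [Matrix.conjTranspose_eq_transpose_of_trivial] at this
  have hWW : (Wᵀ * W - σ ^ 2 • (1 : Matrix (Fin r) (Fin r) ℝ)).PosSemidef := by
    refine Matrix.PosSemidef.of_dotProduct_mulVec_nonneg ?_ ?_
    · rw [Matrix.IsHermitian, Matrix.conjTranspose_eq_transpose_of_trivial,
        Matrix.transpose_sub, Matrix.transpose_mul, Matrix.transpose_transpose,
        Matrix.transpose_smul, Matrix.transpose_one]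
    · intro v
      simp only [star_trivial]
      rw [Matrix.sub_mulVec, dotProduct_sub, dot_mulVec_eq]
      have h1 : v ⬝ᵥ (σ ^ 2 • (1 : Matrix (Fin r) (Fin r) ℝ)) *ᵥ v
          = σ ^ 2 * ∑ j, v j ^ 2 := by
        rw [Matrix.smul_mulVec, Matrix.one_mulVec, dotProduct_smul,
          dot_self_eq_sumSq]
        rfl
      rw [h1]
      have h2 : ∑ i, (W *ᵥ v) i ^ 2
          = (∑ i, (Z *ᵥ v) i ^ 2) + 2 * ((Y *ᵥ v) ⬝ᵥ (Z *ᵥ v)) + ∑ i, (Y *ᵥ v) i ^ 2 := by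
        rw [hW, Matrix.add_mulVec, ← dot_self_eq_sumSq, ← dot_self_eq_sumSq,
          ← dot_self_eq_sumSq, dotProduct_add, add_dotProduct,
          add_dotProduct, dotProduct_comm (Z *ᵥ v) (Y *ᵥ v)]
        ring
      have h3 : 0 ≤ (Y *ᵥ v) ⬝ᵥ (Z *ᵥ v) := by
        have := hSpsd.dotProduct_mulVec_nonneg v
        rwa [star_trivial, ← Matrix.mulVec_mulVec, dot_transpose] at this
      have h4 : σ ^ 2 * (∑ j, v j ^ 2) ≤ ∑ i, (Y *ᵥ v) i ^ 2 := sigmaMin_le Y v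
      have h5 : 0 ≤ ∑ i, (Z *ᵥ v) i ^ 2 := Finset.sum_nonneg fun _ _ => sq_nonneg _
      rw [h2]
      linarith
  have htr : σ ^ 2 * (Hᵀ * H).trace ≤ ((Wᵀ * W) * (Hᵀ * H)).trace := by
    have h0 := trace_mul_psd_nonneg hWW hHH
    rw [Matrix.sub_mul, Matrix.trace_sub, Matrix.smul_mul, Matrix.one_mul,
      Matrix.trace_smul] at h0
    simp only [smul_eq_mul] at h0
    linarith
  have hDD : 0 ≤ (D * D).trace := by
    have : (D * D).trace = ∑ i, ∑ j, D i j ^ 2 := by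
      rw [sumSq_eq_trace, hDT]
    rw [this]
    exact sumSq_nonneg D
  have hHtr : (Hᵀ * H).trace = ∑ i, ∑ j, H i j ^ 2 := (sumSq_eq_trace H).symm
  have hfinal := hsumG
  rw [hsum2] at hfinal
  calc σ ^ 2 * (∑ i, ∑ j, H i j ^ 2) = σ ^ 2 * (Hᵀ * H).trace := by rw [hHtr]
    _ ≤ ((Wᵀ * W) * (Hᵀ * H)).trace := htr
    _ ≤ 2 * (∑ i, ∑ j, (Z * Zᵀ - Y * Yᵀ) i j ^ 2) := by linarith

end InjRad

open InjRad

/-- Inverse injectivity radius: if `X = Y Yᵀ` with `Y` of full column rank and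
`X̃ ⪰ 0` of rank `r` satisfies `‖X̃ − X‖_F < 2 λ_r(X)/(√(r+4) + √r)` (where
`λ_r(X) = σ_r(Y)²`), then there is a unique `H` in the horizontal ball
`{H ∈ H_Y : ‖H‖_F < σ_r(Y)}` with `X̃ = (Y+H)(Y+H)ᵀ`. -/
theorem inverse_injectivity_radius {n r : ℕ}
    (Y : Matrix (Fin n) (Fin r) ℝ) (Xt : Matrix (Fin n) (Fin n) ℝ)
    (hrank : Y.rank = r) (hXt : Xt.PosSemidef) (hXtrank : Xt.rank = r)
    (hclose : frobNorm (Xt - Y * Yᵀ) <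
      2 * sigmaMin Y ^ 2 / (Real.sqrt (r + 4) + Real.sqrt r)) :
    ∃! H : Matrix (Fin n) (Fin r) ℝ,
      (Yᵀ * H = Hᵀ * Y ∧ frobNorm H < sigmaMin Y) ∧
        Xt = (Y + H) * (Y + H)ᵀ := by
  classical
  set σ := sigmaMin Y with hσdef
  set δ := frobNorm (Xt - Y * Yᵀ) with hδdef
  have hδ0 : 0 ≤ δ := frobNorm_nonneg _
  have hs4 : (2:ℝ) ≤ Real.sqrt (r + 4) := by
    rw [show (2:ℝ) = Real.sqrt 4 by
      rw [show (4:ℝ) = 2 ^ 2 by norm_num, Real.sqrt_sq (by norm_num)]]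
    exact Real.sqrt_le_sqrt (by have : (0:ℝ) ≤ r := Nat.cast_nonneg r; linarith)
  have hspos : 0 < Real.sqrt (↑r + 4) + Real.sqrt ↑r := by
    have := Real.sqrt_nonneg (r:ℝ); linarith
  have hσpos : 0 < σ := by
    rcases (sigmaMin_nonneg Y).lt_or_eq with h | h
    · exact h
    · exfalso
      rw [hσdef] at hclose
      rw [← h] at hclose
      norm_num at hclose
      linarith
  have hr1 : 1 ≤ r := by
    by_contra h
    have hr0 : r = 0 := by omega
    subst hr0
    have := sigmaMin_zero_of_r_zero Y
    rw [← hσdef] at this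
    linarith
  have hsr : (1:ℝ) ≤ Real.sqrt ↑r := by
    rw [show (1:ℝ) = Real.sqrt 1 by simp]
    exact Real.sqrt_le_sqrt (by exact_mod_cast hr1)
  have hδ3 : δ < 2 * σ ^ 2 / 3 := by
    have h1 : 2 * σ ^ 2 / (Real.sqrt (↑r + 4) + Real.sqrt ↑r) ≤ 2 * σ ^ 2 / 3 := by
      apply div_le_div_of_nonneg_left (by positivity) (by norm_num)
      linarith
    calc δ < 2 * σ ^ 2 / (Real.sqrt (↑r + 4) + Real.sqrt ↑r) := hclose
      _ ≤ 2 * σ ^ 2 / 3 := h1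
  have hσ2pos : 0 < σ ^ 2 := pow_pos hσpos 2
  have hdlam : δ < σ ^ 2 := by nlinarith
  have h2δ2 : 2 * δ ^ 2 < (σ ^ 2) ^ 2 := by nlinarith
  -- K is positive definite
  have hXtsym : Xtᵀ = Xt := transpose_eq_of_isHermitian hXt.1
  have hK : (Yᵀ * Xt * Y).PosDef := posDef_K hXt hσpos (by exact hdlam)
  set K := Yᵀ * Xt * Y with hKdef
  have hKdet : IsUnit K.det := (Matrix.isUnit_iff_isUnit_det K).1 hK.isUnit
  set Ksq := psdSqrt K with hKsqdef
  have hKsqPSD : Ksq.PosSemidef := psdSqrt_posSemidef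
  have hKsqmul : Ksq * Ksq = K := psdSqrt_mul_self hK.posSemidef
  have hKsqsym : Ksqᵀ = Ksq := transpose_eq_of_isHermitian hKsqPSD.1
  have hKsqdet : IsUnit Ksq.det := by
    have hdet : Ksq.det * Ksq.det = K.det := by rw [← Matrix.det_mul, hKsqmul]
    exact isUnit_of_mul_isUnit_left (hdet ▸ hKdet)
  have hKsqinv : Ksq * Ksq⁻¹ = 1 := Matrix.mul_nonsing_inv _ hKsqdet
  have hKsqinv' : Ksq⁻¹ * Ksq = 1 := Matrix.nonsing_inv_mul _ hKsqdet
  -- R = sqrt of Xt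
  set R := psdSqrt Xt with hRdef
  have hRmul : R * R = Xt := psdSqrt_mul_self hXt
  have hRsym : Rᵀ = R := transpose_eq_of_isHermitian psdSqrt_posSemidef.1
  have hKC : (R * Y)ᵀ * (R * Y) = K := by
    rw [Matrix.transpose_mul, hRsym, hKdef, ← hRmul]
    simp only [Matrix.mul_assoc]
  have hrankR : R.rank ≤ r := by
    have h1 : (Rᵀ * R).rank = R.rank := Matrix.rank_transpose_mul_self R
    rw [hRsym, hRmul, hXtrank] at h1
    omega
  have hproj : (R * Y) * ((R * Y)ᵀ * (R * Y))⁻¹ * (R * Y)ᵀ * R = R :=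
    proj_fix R Y (by rw [hKC]; exact hKdet) hrankR
  rw [hKC] at hproj
  -- Z
  set Z := Xt * Y * Ksq⁻¹ with hZdef
  have hYZ : Yᵀ * Z = Ksq := by
    calc Yᵀ * (Xt * Y * Ksq⁻¹) = (Yᵀ * Xt * Y) * Ksq⁻¹ := by
          simp only [Matrix.mul_assoc]
      _ = (Ksq * Ksq) * Ksq⁻¹ := by rw [← hKdef, ← hKsqmul]
      _ = Ksq := by rw [Matrix.mul_assoc, hKsqinv, Matrix.mul_one]
  have hZT : Zᵀ = Ksq⁻¹ * (Yᵀ * Xt) := by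
    rw [hZdef, Matrix.transpose_mul, Matrix.transpose_mul, Matrix.transpose_nonsing_inv,
      hKsqsym, hXtsym]
  have hKinvsq : Ksq⁻¹ * Ksq⁻¹ = K⁻¹ := by
    rw [← Matrix.mul_inv_rev, hKsqmul]
  have hZZ : Z * Zᵀ = Xt := by
    have step1 : Z * Zᵀ = Xt * Y * K⁻¹ * Yᵀ * Xt := by
      rw [hZT, hZdef]
      calc Xt * Y * Ksq⁻¹ * (Ksq⁻¹ * (Yᵀ * Xt))
          = Xt * Y * (Ksq⁻¹ * Ksq⁻¹) * (Yᵀ * Xt) := by simp only [Matrix.mul_assoc]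
        _ = Xt * Y * K⁻¹ * Yᵀ * Xt := by rw [hKinvsq]; simp only [Matrix.mul_assoc]
    have hproj2 : R * (Y * (K⁻¹ * (Yᵀ * (R * R)))) = R := by
      have := hproj
      rw [Matrix.transpose_mul, hRsym] at this
      simpa only [Matrix.mul_assoc] using this
    calc Z * Zᵀ = Xt * Y * K⁻¹ * Yᵀ * Xt := step1
      _ = R * (R * (Y * (K⁻¹ * (Yᵀ * (R * R))))) := by
          rw [← hRmul]; simp only [Matrix.mul_assoc]
      _ = R * R := by rw [hproj2]
      _ = Xt := hRmul
  -- the candidate H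
  have hYplus : Y + (Z - Y) = Z := by abel
  have hsymH : Yᵀ * (Z - Y) = (Z - Y)ᵀ * Y := by
    rw [Matrix.mul_sub, hYZ, Matrix.transpose_sub, Matrix.sub_mul]
    have : Zᵀ * Y = Ksq := by
      have := congrArg Matrix.transpose hYZ
      rwa [Matrix.transpose_mul, Matrix.transpose_transpose, hKsqsym] at this
    rw [this]
  -- norm bound
  have hSpsd : (Yᵀ * Z).PosSemidef := by rw [hYZ]; exact hKsqPSD
  have hkey := key_ineq hSpsd
  rw [hZZ] at hkey
  have hδsq : ∑ i, ∑ j, (Xt - Y * Yᵀ) i j ^ 2 = δ ^ 2 := (frobNorm_sq _).symm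
  rw [hδsq, ← hσdef] at hkey
  set t := ∑ i, ∑ j, (Z - Y) i j ^ 2 with htdef
  have ht0 : 0 ≤ t := sumSq_nonneg _
  have htlt : t < σ ^ 2 := by nlinarith
  have hnormH : frobNorm (Z - Y) < σ := by
    rw [hδdef] at *
    have : frobNorm (Z - Y) = Real.sqrt t := rfl
    rw [this, show σ = Real.sqrt (σ ^ 2) by rw [Real.sqrt_sq hσpos.le]]
    exact Real.sqrt_lt_sqrt ht0 htlt
  refine ⟨Z - Y, ⟨⟨hsymH, hnormH⟩, by rw [hYplus, hZZ]⟩, ?_⟩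
  -- uniqueness
  rintro H' ⟨⟨hsym', hnorm'⟩, heq'⟩
  set Z' := Y + H' with hZ'def
  have hT'sym : (Yᵀ * Z')ᵀ = Yᵀ * Z' := by
    rw [hZ'def, Matrix.mul_add, Matrix.transpose_add, Matrix.transpose_mul,
      Matrix.transpose_mul, Matrix.transpose_transpose, ← hsym']
  have hT'pd : (Yᵀ * Z').PosDef := posDef_of_horizontal_ball hT'sym hσpos hnorm'
  have hT'sq : (Yᵀ * Z') * (Yᵀ * Z') = K := by
    have hzy : Z'ᵀ * Y = Yᵀ * Z' := by
      have := congrArg Matrix.transpose hT'sym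
      rw [Matrix.transpose_transpose] at this
      rw [← hT'sym, Matrix.transpose_mul, Matrix.transpose_transpose]
    calc (Yᵀ * Z') * (Yᵀ * Z') = (Yᵀ * Z') * (Z'ᵀ * Y) := by rw [hzy]
      _ = Yᵀ * (Z' * Z'ᵀ) * Y := by simp only [Matrix.mul_assoc]
      _ = K := by rw [← heq', hKdef]
  have hTT : Yᵀ * Z' = Ksq := by
    apply psd_eq_of_sq_eq_sq hT'pd.posSemidef hKsqPSD
    rw [pow_two, pow_two, hT'sq, hKsqmul]
  -- apply eq_of_same_gram
  have hZtZpd : (Zᵀ * Z).PosDef := by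
    refine Matrix.PosDef.of_dotProduct_mulVec_pos ?_ ?_
    · rw [Matrix.IsHermitian, Matrix.conjTranspose_eq_transpose_of_trivial,
        Matrix.transpose_mul, Matrix.transpose_transpose]
    · intro v hv
      simp only [star_trivial]
      rw [dot_mulVec_eq]
      apply vec_sumSq_pos
      intro hZv
      apply hv
      have h1 : Ksq *ᵥ v = 0 := by
        rw [← hYZ, ← Matrix.mulVec_mulVec, hZv, Matrix.mulVec_zero]
      have hinj : Function.Injective (Ksq.mulVec) :=
        Matrix.mulVec_injective_iff_isUnit.mpr ((Matrix.isUnit_iff_isUnit_det Ksq).2 hKsqdet)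
      have := hinj (h1.trans (Matrix.mulVec_zero Ksq).symm)
      exact this
  have hfinal : Z' = Z := by
    apply eq_of_same_gram (Y := Y)
    · rw [← heq', hZZ]
    · exact (Matrix.isUnit_iff_isUnit_det _).1 hZtZpd.isUnit
    · rw [hTT, hYZ]
    · rw [hYZ]; exact hKsqdet
  rw [← hfinal, hZ'def]
  abel
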